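/- Let f ∈ ℝ[[x₁,…,xₙ]] be a formal power series and let 𝔞 be an ideal of ℝ[[x₁,…,xₙ]] containing the Jacobian ideal Δ(f). Set A = ℝ[[x₁,…,xₙ]]/𝔞 and let a = [f] ∈ A be the class of f. Then every ℝ-linear derivation D : A → A that is continuous with respect to the topology on A defined by the powers of its maximal ideal satisfies D(a) = 0. -/

import Mathlib

/-- The `i`-th formal partial derivative of a multivariate formal power series over `ℝ`. -/
noncomputable def mvPderiv {n : ℕ} (i : Fin n) (f : MvPowerSeries (Fin n) ℝ) :
    MvPowerSeries (Fin n) ℝ :=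
  fun m => (m i + 1 : ℝ) * MvPowerSeries.coeff (m + Finsupp.single i 1) f

/-- The Jacobian ideal Δ(f), generated by the formal partial derivatives of `f`. -/
noncomputable def jacobianIdeal {n : ℕ} (f : MvPowerSeries (Fin n) ℝ) :
    Ideal (MvPowerSeries (Fin n) ℝ) :=
  Ideal.span (Set.range fun i => mvPderiv i f)

/-- The maximal ideal of the quotient `ℝ[[x₁,…,xₙ]]/𝔞`: the image of the ideal of power
series with vanishing constant term. -/
noncomputable def maxIdealQuot {n : ℕ} (𝔞 : Ideal (MvPowerSeries (Fin n) ℝ)) :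
    Ideal (MvPowerSeries (Fin n) ℝ ⧸ 𝔞) :=
  Ideal.map (Ideal.Quotient.mk 𝔞) (RingHom.ker (MvPowerSeries.constantCoeff (σ := Fin n) (R := ℝ)))

/-!
Truncating `f` below total degree `K + 1` writes it as a polynomial `p` plus a tail in `𝔪 ^ (K + 1)`,
where `𝔪` is the ideal of series without constant term. A derivation maps `𝔪 ^ (K + 1)` into
`𝔪 ^ K`, and the chain rule gives `D [p] = ∑ᵢ [∂ᵢ p] • D [xᵢ]`, where `[∂ᵢ p] = -[∂ᵢ (f - p)]`
lies in the image of `𝔪 ^ K` because `∂ᵢ f ∈ 𝔞`. So `D [f]` lies in every power of the image of `𝔪`,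
and Krull's intersection theorem in the Noetherian ring `A` (that image lies in its Jacobson
radical) gives `D [f] = 0`.
-/

open MvPowerSeries

theorem Derivation.apply_mem_pow_of_mem_pow_succ {R A : Type*} [CommSemiring R] [CommSemiring A]
    [Algebra R A] (D : Derivation R A A) (I : Ideal A) {k : ℕ} {x : A} (hx : x ∈ I ^ (k + 1)) :
    D x ∈ I ^ k := by
  induction k generalizing x with
  | zero => simp
  | succ k ih =>
    rw [pow_succ] at hx
    refine Submodule.mul_induction_on hx (fun a ha b hb ↦ ?_) fun y z hy hz ↦ ?_
    · have hbDa : b * D a ∈ I ^ (k + 1) := pow_succ' I k ▸ Ideal.mul_mem_mul hb (ih ha)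
      rw [D.leibniz, smul_eq_mul, smul_eq_mul]
      exact add_mem (Ideal.mul_mem_right _ _ ha) hbDa
    · exact map_add D y z ▸ add_mem hy hz

theorem Derivation.map_mvPolynomial_aeval {R A M σ : Type*} [CommSemiring R] [CommSemiring A]
    [Algebra R A] [AddCommMonoid M] [Module A M] [Module R M] [IsScalarTower R A M] [Fintype σ]
    (D : Derivation R A M) (x : σ → A) (p : MvPolynomial σ R) :
    D (MvPolynomial.aeval x p) =
      ∑ i, MvPolynomial.aeval x (MvPolynomial.pderiv i p) • D (x i) := by
  classical
  induction p using MvPolynomial.induction_on with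
  | C a => simp
  | add p q hp hq => simp [hp, hq, add_smul, Finset.sum_add_distrib]
  | mul_X p i hp =>
    simp [hp, MvPolynomial.pderiv_X, add_smul, mul_smul, Finset.sum_add_distrib, Finset.smul_sum,
      Pi.single_apply, apply_ite (MvPolynomial.aeval x), ite_smul]

theorem Derivation.map_algHom_coe_mvPolynomial {R B M σ : Type*} [CommSemiring R]
    [CommSemiring B] [Algebra R B] [AddCommMonoid M] [Module B M] [Module R M]
    [IsScalarTower R B M] [Fintype σ] (D : Derivation R B M) (φ : MvPowerSeries σ R →ₐ[R] B)
    (p : MvPolynomial σ R) :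
    D (φ p) = ∑ i, φ (MvPolynomial.pderiv i p) • D (φ (X i)) := by
  have hφ (q : MvPolynomial σ R) : φ q = MvPolynomial.aeval (fun i ↦ φ (X i)) q := by
    simpa [Function.comp_def] using DFunLike.congr_fun
      (MvPolynomial.aeval_unique (φ.comp (MvPolynomial.coeToMvPowerSeries.algHom R))) q
  simp only [hφ, D.map_mvPolynomial_aeval]

namespace MvPowerSeries

variable {σ R : Type*} [CommRing R]

theorem mem_pow_span_range_X_of_coeff_eq_zero [Finite σ] {n : ℕ} {p : MvPowerSeries σ R}
    (h : ∀ d : σ →₀ ℕ, d.degree < n → coeff d p = 0) :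
    p ∈ Ideal.span (Set.range X) ^ n := by
  set e := (toAdicCompletionAlgEquiv σ R).toRingEquiv
  have hX : Ideal.map e (Ideal.span (Set.range X)) =
      (MvPolynomial.idealOfVars σ R).map (algebraMap ..) := by
    simp_rw [Ideal.map_span, ← Set.range_comp]
    congr 2; ext1
    simp [e, AdicCompletion.algebraMap_apply, ← MvPolynomial.coe_X, toAdicCompletion_coe]
  have htrunc : truncTotal n p = 0 := by
    ext d
    simpa [coeff_truncTotal_eq_ite] using h d
  rw [← Ideal.apply_mem_of_equiv_iff (f := e), Ideal.map_pow, hX, ← Ideal.map_pow,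
    ← Submodule.restrictScalars_mem (MvPolynomial σ R), ← Ideal.smul_top_eq_map,
    AdicCompletion.pow_smul_top_eq_ker_eval (MvPolynomial.idealOfVars_fg σ R),
    LinearMap.mem_ker, AdicCompletion.eval_apply]
  simp [e, toAdicCompletion_apply_eq_mk_truncTotal, htrunc]

theorem ker_constantCoeff_eq_span_range_X [Finite σ] :
    RingHom.ker (constantCoeff (σ := σ) (R := R)) = Ideal.span (Set.range X) := by
  refine le_antisymm (fun p hp ↦ ?_) ?_
  · refine pow_one (Ideal.span (Set.range (X : σ → MvPowerSeries σ R))) ▸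
      mem_pow_span_range_X_of_coeff_eq_zero fun d hd ↦ ?_
    rw [Nat.lt_one_iff, Finsupp.degree_eq_zero_iff] at hd
    simpa [hd] using hp
  · rw [Ideal.span_le, Set.range_subset_iff]
    intro i
    simp

theorem sub_truncTotal_mem_pow_ker_constantCoeff [Finite σ] (n : ℕ) (p : MvPowerSeries σ R) :
    p - truncTotal n p ∈ RingHom.ker (constantCoeff (σ := σ) (R := R)) ^ n := by
  rw [ker_constantCoeff_eq_span_range_X]
  refine mem_pow_span_range_X_of_coeff_eq_zero fun d hd ↦ ?_
  simp [coeff_truncTotal _ hd]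

theorem ker_constantCoeff_le_jacobson_bot :
    RingHom.ker (constantCoeff (σ := σ) (R := R)) ≤ Ideal.jacobson ⊥ := fun p hp ↦
  Ideal.mem_jacobson_bot.mpr fun q ↦ by
    simp [isUnit_iff_constantCoeff, (RingHom.mem_ker).mp hp]

theorem iInf_pow_map_ker_constantCoeff_eq_bot [Finite σ] [IsNoetherianRing R]
    (𝔞 : Ideal (MvPowerSeries σ R)) :
    ⨅ K : ℕ, (RingHom.ker constantCoeff).map (Ideal.Quotient.mk 𝔞) ^ K = ⊥ := by
  have hJ : (RingHom.ker constantCoeff).map (Ideal.Quotient.mk 𝔞) ≤ Ideal.jacobson ⊥ :=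
    calc (RingHom.ker constantCoeff).map (Ideal.Quotient.mk 𝔞)
        ≤ 𝔞.jacobson.map (Ideal.Quotient.mk 𝔞) :=
          Ideal.map_mono (ker_constantCoeff_le_jacobson_bot.trans (Ideal.jacobson_mono bot_le))
      _ = (𝔞.map (Ideal.Quotient.mk 𝔞)).jacobson :=
          Ideal.map_jacobson_of_surjective Ideal.Quotient.mk_surjective Ideal.mk_ker.le
      _ = Ideal.jacobson ⊥ := by rw [Ideal.map_quotient_self]
  simpa using Ideal.iInf_pow_smul_eq_bot_of_le_jacobson (M := MvPowerSeries σ R ⧸ 𝔞) _ hJ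

variable [Fintype σ] {𝔞 : Ideal (MvPowerSeries σ R)}

theorem derivation_mk_mem_pow_of_pderiv_mem
    (D : Derivation R (MvPowerSeries σ R ⧸ 𝔞) (MvPowerSeries σ R ⧸ 𝔞)) {f : MvPowerSeries σ R}
    (hf : ∀ i, pderiv R i f ∈ 𝔞) (K : ℕ) :
    D (Ideal.Quotient.mk 𝔞 f) ∈ (RingHom.ker constantCoeff).map (Ideal.Quotient.mk 𝔞) ^ K := by
  set π := Ideal.Quotient.mkₐ R 𝔞
  set m := RingHom.ker (constantCoeff (σ := σ) (R := R))
  have hπ {g : MvPowerSeries σ R} {j : ℕ} (hg : g ∈ m ^ j) :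
      π g ∈ m.map (Ideal.Quotient.mk 𝔞) ^ j :=
    Ideal.map_pow (Ideal.Quotient.mk 𝔞) m j ▸ Ideal.mem_map_of_mem _ hg
  set p := truncTotal (K + 1) f
  have htail : f - p ∈ m ^ (K + 1) := sub_truncTotal_mem_pow_ker_constantCoeff _ _
  have hpderiv (i : σ) : π (MvPolynomial.pderiv i p) ∈ m.map (Ideal.Quotient.mk 𝔞) ^ K := by
    have : π (pderiv R i (f - p)) = -π (MvPolynomial.pderiv i p) := by
      rw [map_sub, ← pderiv_coe, map_sub, Ideal.Quotient.mkₐ_eq_mk,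
        Ideal.Quotient.eq_zero_iff_mem.mpr (hf i), zero_sub]
    exact neg_mem_iff.mp (this ▸ hπ ((pderiv R i).apply_mem_pow_of_mem_pow_succ m htail))
  have hsplit : D (π f) = D (π p) + D (π (f - p)) := by
    rw [← map_add, ← map_add, add_sub_cancel]
  rw [← Ideal.Quotient.mkₐ_eq_mk R, hsplit, D.map_algHom_coe_mvPolynomial]
  exact add_mem (Ideal.sum_mem _ fun i _ ↦ Ideal.mul_mem_right _ _ (hpderiv i))
    (D.apply_mem_pow_of_mem_pow_succ _ (hπ htail))

theorem derivation_mk_eq_zero_of_pderiv_mem [IsNoetherianRing R]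
    (D : Derivation R (MvPowerSeries σ R ⧸ 𝔞) (MvPowerSeries σ R ⧸ 𝔞)) {f : MvPowerSeries σ R}
    (hf : ∀ i, pderiv R i f ∈ 𝔞) : D (Ideal.Quotient.mk 𝔞 f) = 0 := by
  rw [← Ideal.mem_bot, ← iInf_pow_map_ker_constantCoeff_eq_bot 𝔞, Ideal.mem_iInf]
  exact derivation_mk_mem_pow_of_pderiv_mem D hf

end MvPowerSeries

theorem mvPderiv_eq_pderiv {n : ℕ} (i : Fin n) (f : MvPowerSeries (Fin n) ℝ) :
    mvPderiv i f = pderiv ℝ i f := by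
  ext m
  rw [coeff_pderiv, mul_comm]
  rfl

theorem stmt_2 {n : ℕ} (f : MvPowerSeries (Fin n) ℝ)
    (𝔞 : Ideal (MvPowerSeries (Fin n) ℝ)) (hΔ : jacobianIdeal f ≤ 𝔞)
    (D : Derivation ℝ (MvPowerSeries (Fin n) ℝ ⧸ 𝔞) (MvPowerSeries (Fin n) ℝ ⧸ 𝔞)) :
    D (Ideal.Quotient.mk 𝔞 f) = 0 :=
  derivation_mk_eq_zero_of_pderiv_mem D fun i ↦
    hΔ (mvPderiv_eq_pderiv i f ▸ Ideal.subset_span ⟨i, rfl⟩)
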